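/- arXiv:2603.06211 — 3 statements merged into one kernel-verified Lean document; each statement's English description precedes it below -/
import Mathlib

section
/- An additive function f : ℝ → ℝ that is bounded above on some nonempty open interval is of the form f(x) = c·x for some constant c. -/
theorem stmt_8 (f : ℝ → ℝ) (hf : ∀ x y : ℝ, f (x + y) = f x + f y)
    (a b M : ℝ) (hab : a < b) (hbd : ∀ x ∈ Set.Ioo a b, f x ≤ M) :
    ∃ c : ℝ, ∀ x : ℝ, f x = c * x := by
  set c := f 1 with hc
  refine ⟨c, ?_⟩
  by_contra h
  push_neg at h
  obtain ⟨x0, hx0⟩ := h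
  -- the additive hom G x = f x - c * x
  set g : ℝ → ℝ := fun x => f x - c * x with hg
  have hgadd : ∀ x y, g (x + y) = g x + g y := by
    intro x y; simp only [hg, hf]; ring
  set G : ℝ →+ ℝ := AddMonoidHom.mk' g hgadd with hG
  have hGrat : ∀ q : ℚ, G (q : ℝ) = 0 := by
    intro q
    have := map_ratCast_smul G ℝ ℝ q (1 : ℝ)
    simp only [smul_eq_mul, mul_one] at this
    have h1 : G 1 = 0 := by simp [hG, hg, hc]
    rw [this, h1, mul_zero]
  have hGshift : ∀ (x : ℝ) (q : ℚ), G (x + q) = G x := by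
    intro x q; rw [map_add, hGrat, add_zero]
  -- bound on G over the interval
  set M' : ℝ := M + |c| * (|a| + |b|) with hM'
  have hGbd : ∀ x ∈ Set.Ioo a b, G x ≤ M' := by
    intro x hx
    have hxa : |x| ≤ |a| + |b| := by
      rcases hx with ⟨h1, h2⟩
      rw [abs_le]
      constructor
      · nlinarith [neg_abs_le a, abs_nonneg b]
      · nlinarith [le_abs_self b, abs_nonneg a]
    have : -(c * x) ≤ |c| * (|a| + |b|) := by
      calc -(c * x) ≤ |c * x| := neg_le_abs _
        _ = |c| * |x| := abs_mul c x
        _ ≤ |c| * (|a| + |b|) := by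
            exact mul_le_mul_of_nonneg_left hxa (abs_nonneg c)
    have hfx := hbd x hx
    simp only [hG, hg, AddMonoidHom.mk'_apply]
    linarith
  have hGx0 : G x0 ≠ 0 := by
    simp only [hG, hg, AddMonoidHom.mk'_apply]
    intro hcon; apply hx0; linarith
  -- WLOG get a point with positive value
  obtain ⟨y, hy⟩ : ∃ y, 0 < G y := by
    rcases lt_or_gt_of_ne hGx0 with hneg | hpos
    · exact ⟨-x0, by rw [map_neg]; linarith⟩
    · exact ⟨x0, hpos⟩
  -- choose large n
  obtain ⟨n, hn⟩ := exists_nat_gt (M' / G y)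
  have hnM : M' < n * G y := by
    rwa [div_lt_iff₀ hy] at hn
  -- shift n • y into the interval by a rational
  obtain ⟨q, hq1, hq2⟩ := exists_rat_btwn (show a - n * y < b - n * y by linarith)
  have hmem : (n : ℝ) * y + q ∈ Set.Ioo a b := by
    constructor <;> [linarith; linarith]
  have hval : G ((n : ℝ) * y + q) = n * G y := by
    rw [hGshift]
    have := map_nsmul G n y
    simpa [nsmul_eq_mul] using this
  have := hGbd _ hmem
  rw [hval] at this
  linarith
end

section
/- Let μ be a real-valued function on effects of a finite-dimensional complex Hilbert space that is countably additive (μ(∑ᵢ Aᵢ) = ∑ᵢ μ(Aᵢ) whenever the effects Aᵢ satisfy ∑ᵢ Aᵢ ≤ I) and non-negative. Then for any fixed effect A, the map t ↦ μ(tA) on [0,1] is continuous at every point: for every r ∈ [0,1], lim_{q→r, q∈ℚ∩[0,1]} μ(qA) = μ(rA). -/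
open Matrix
open scoped ComplexOrder

/-- `A` is an effect: `0 ≤ A ≤ I`. -/
def IsEffect {d : ℕ} (A : Matrix (Fin d) (Fin d) ℂ) : Prop :=
  A.PosSemidef ∧ (1 - A).PosSemidef

/-!
The map `f t = μ (t • A)` is additive on `[0, 1]` (`f (s + t) = f s + f t` whenever `s + t ≤ 1`)
and non-negative, hence monotone, and `|f t - f s| = f |t - s|`. So continuity on `[0, 1]`
reduces to `f` taking arbitrarily small values at small positive arguments, which holds because
`A = ∑ 2⁻ⁱ⁻¹ • A` makes `∑ f (2⁻ⁱ⁻¹)` convergent.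
-/

open Set Filter Topology

section AdditiveOnUnitInterval

variable {f : ℝ → ℝ}

lemma sub_eq_of_additive
    (hadd : ∀ s t, 0 ≤ s → 0 ≤ t → s + t ≤ 1 → f (s + t) = f s + f t) {s t : ℝ}
    (hs : s ∈ Icc (0 : ℝ) 1) (ht : t ∈ Icc (0 : ℝ) 1) (hst : s ≤ t) :
    f t - f s = f (t - s) := by
  have hsplit := hadd s (t - s) hs.1 (sub_nonneg.2 hst) (by linarith [ht.2])
  rw [add_sub_cancel] at hsplit
  linarith

lemma sub_mem_Icc_of_le {s t : ℝ} (hs : s ∈ Icc (0 : ℝ) 1) (ht : t ∈ Icc (0 : ℝ) 1)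
    (hst : s ≤ t) : t - s ∈ Icc (0 : ℝ) 1 :=
  ⟨sub_nonneg.2 hst, by linarith [hs.1, ht.2]⟩

lemma monotoneOn_Icc_of_additive_of_nonneg
    (hadd : ∀ s t, 0 ≤ s → 0 ≤ t → s + t ≤ 1 → f (s + t) = f s + f t)
    (hnn : ∀ t ∈ Icc (0 : ℝ) 1, 0 ≤ f t) :
    MonotoneOn f (Icc 0 1) := fun s hs t ht hst => by
  linarith [sub_eq_of_additive hadd hs ht hst, hnn _ (sub_mem_Icc_of_le hs ht hst)]

lemma abs_sub_eq_of_additive_of_nonneg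
    (hadd : ∀ s t, 0 ≤ s → 0 ≤ t → s + t ≤ 1 → f (s + t) = f s + f t)
    (hnn : ∀ t ∈ Icc (0 : ℝ) 1, 0 ≤ f t) {s t : ℝ} (hs : s ∈ Icc (0 : ℝ) 1)
    (ht : t ∈ Icc (0 : ℝ) 1) :
    |f t - f s| = f |t - s| := by
  rcases le_total s t with hst | hts
  · rw [sub_eq_of_additive hadd hs ht hst, abs_of_nonneg (hnn _ (sub_mem_Icc_of_le hs ht hst)),
      abs_of_nonneg (sub_nonneg.2 hst)]
  · rw [abs_sub_comm, sub_eq_of_additive hadd ht hs hts,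
      abs_of_nonneg (hnn _ (sub_mem_Icc_of_le ht hs hts)), abs_sub_comm,
      abs_of_nonneg (sub_nonneg.2 hts)]

lemma continuousOn_Icc_of_additive_of_nonneg
    (hadd : ∀ s t, 0 ≤ s → 0 ≤ t → s + t ≤ 1 → f (s + t) = f s + f t)
    (hnn : ∀ t ∈ Icc (0 : ℝ) 1, 0 ≤ f t) (hsmall : ∀ ε > 0, ∃ δ ∈ Ioc (0 : ℝ) 1, f δ < ε) :
    ContinuousOn f (Icc 0 1) := by
  rw [Metric.continuousOn_iff]
  intro b hb ε hε
  obtain ⟨δ, hδ, hfδ⟩ := hsmall ε hε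
  refine ⟨δ, hδ.1, fun a ha hab => ?_⟩
  rw [Real.dist_eq] at hab ⊢
  have hab_mem : |a - b| ∈ Icc (0 : ℝ) 1 :=
    ⟨abs_nonneg _, abs_sub_le_iff.2 ⟨by linarith [ha.2, hb.1], by linarith [ha.1, hb.2]⟩⟩
  calc |f a - f b| = f |a - b| := abs_sub_eq_of_additive_of_nonneg hadd hnn hb ha
    _ ≤ f δ := monotoneOn_Icc_of_additive_of_nonneg hadd hnn hab_mem ⟨hδ.1.le, hδ.2⟩ hab.le
    _ < ε := hfδ

end AdditiveOnUnitInterval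

section Effects

variable {d : ℕ}

lemma IsEffect.zero : IsEffect (0 : Matrix (Fin d) (Fin d) ℂ) :=
  ⟨PosSemidef.zero, by simpa using PosSemidef.one⟩

lemma IsEffect.real_smul {A : Matrix (Fin d) (Fin d) ℂ} (hA : IsEffect A) {c : ℝ} (h0 : 0 ≤ c)
    (h1 : c ≤ 1) : IsEffect ((c : ℂ) • A) := by
  have hcompl : (1 : Matrix (Fin d) (Fin d) ℂ) - (c : ℂ) • A = (1 - c) • A + (1 - A) := by
    rw [Complex.coe_smul]
    module
  refine ⟨?_, ?_⟩
  · rw [Complex.coe_smul]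
    exact hA.1.smul h0
  · rw [hcompl]
    exact (hA.1.smul (sub_nonneg.2 h1)).add hA.2

def IsCountablyAdditive (μ : Matrix (Fin d) (Fin d) ℂ → ℝ) : Prop :=
  ∀ A : ℕ → Matrix (Fin d) (Fin d) ℂ,
    (∀ i, IsEffect (A i)) → Summable A → (1 - ∑' i, A i).PosSemidef →
    HasSum (fun i => μ (A i)) (μ (∑' i, A i))

namespace IsCountablyAdditive

variable {μ : Matrix (Fin d) (Fin d) ℂ → ℝ}

lemma map_zero (hμ : IsCountablyAdditive μ) : μ 0 = 0 := by
  have h := hμ (fun _ => 0) (fun _ => IsEffect.zero) summable_zero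
    (by simpa using PosSemidef.one)
  rw [tsum_zero] at h
  exact tendsto_nhds_unique tendsto_const_nhds h.summable.tendsto_atTop_zero

lemma map_add (hμ : IsCountablyAdditive μ) {X Y : Matrix (Fin d) (Fin d) ℂ} (hX : IsEffect X)
    (hY : IsEffect Y) (hXY : (1 - (X + Y)).PosSemidef) : μ (X + Y) = μ X + μ Y := by
  let B : ℕ → Matrix (Fin d) (Fin d) ℂ := Pi.single 0 X + Pi.single 1 Y
  have hB : HasSum B (X + Y) := (hasSum_pi_single 0 X).add (hasSum_pi_single 1 Y)
  have hBeff : ∀ i, IsEffect (B i) := by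
    rintro (_ | _ | i)
    · simpa [B] using hX
    · simpa [B] using hY
    · simpa [B] using IsEffect.zero
  have hμB : (fun i => μ (B i)) = Pi.single 0 (μ X) + Pi.single 1 (μ Y) := by
    ext (_ | _ | i) <;> simp [B, hμ.map_zero]
  have h := hμ B hBeff hB.summable (by rwa [hB.tsum_eq])
  rw [hB.tsum_eq, hμB] at h
  exact h.unique ((hasSum_pi_single 0 _).add (hasSum_pi_single 1 _))

lemma map_add_smul (hμ : IsCountablyAdditive μ) {A : Matrix (Fin d) (Fin d) ℂ} (hA : IsEffect A)
    {s t : ℝ} (hs : 0 ≤ s) (ht : 0 ≤ t) (hst : s + t ≤ 1) :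
    μ (((s + t : ℝ) : ℂ) • A) = μ ((s : ℂ) • A) + μ ((t : ℂ) • A) := by
  have hsum := hA.real_smul (add_nonneg hs ht) hst
  rw [Complex.ofReal_add, add_smul] at hsum ⊢
  exact hμ.map_add (hA.real_smul hs (by linarith)) (hA.real_smul ht (by linarith)) hsum.2

lemma hasSum_half_pow_smul (hμ : IsCountablyAdditive μ) {A : Matrix (Fin d) (Fin d) ℂ}
    (hA : IsEffect A) :
    HasSum (fun i : ℕ => μ ((((2 : ℝ)⁻¹ ^ (i + 1) : ℝ) : ℂ) • A)) (μ A) := by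
  have hhalf : HasSum (fun i : ℕ => (2 : ℝ)⁻¹ ^ (i + 1)) 1 := by
    convert hasSum_geometric_two' 1 using 1
    ext i
    rw [pow_succ, one_div, inv_pow, div_eq_mul_inv, mul_comm]
  have hA_sum : HasSum (fun i : ℕ => ((((2 : ℝ)⁻¹ ^ (i + 1) : ℝ) : ℂ) • A)) A := by
    simpa only [Complex.coe_smul, one_smul] using hhalf.smul_const A
  have h := hμ _ (fun i => hA.real_smul (by positivity) (pow_le_one₀ (by norm_num) (by norm_num)))
    hA_sum.summable (by rw [hA_sum.tsum_eq]; exact hA.2)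
  rwa [hA_sum.tsum_eq] at h

lemma exists_smul_lt (hμ : IsCountablyAdditive μ) {A : Matrix (Fin d) (Fin d) ℂ}
    (hA : IsEffect A) : ∀ ε > 0, ∃ δ ∈ Ioc (0 : ℝ) 1, μ ((δ : ℂ) • A) < ε := by
  intro ε hε
  obtain ⟨n, hn⟩ :=
    ((hμ.hasSum_half_pow_smul hA).summable.tendsto_atTop_zero.eventually
      (eventually_lt_nhds hε)).exists
  exact ⟨_, ⟨by positivity, pow_le_one₀ (by norm_num) (by norm_num)⟩, hn⟩

end IsCountablyAdditive

end Effects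

theorem stmt_12 (d : ℕ) (μ : Matrix (Fin d) (Fin d) ℂ → ℝ)
    (hadd : ∀ A : ℕ → Matrix (Fin d) (Fin d) ℂ,
      (∀ i, IsEffect (A i)) → Summable A → (1 - ∑' i, A i).PosSemidef →
      HasSum (fun i => μ (A i)) (μ (∑' i, A i)))
    (hnn : ∀ A : Matrix (Fin d) (Fin d) ℂ, IsEffect A → 0 ≤ μ A) :
    ∀ A : Matrix (Fin d) (Fin d) ℂ, IsEffect A →
      ∀ r : ℝ, r ∈ Set.Icc (0 : ℝ) 1 →
        ∀ ε > (0 : ℝ), ∃ δ > (0 : ℝ), ∀ q : ℚ,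
          (q : ℝ) ∈ Set.Icc (0 : ℝ) 1 → |(q : ℝ) - r| < δ →
          |μ (((q : ℝ) : ℂ) • A) - μ ((r : ℂ) • A)| < ε := by
  intro A hA r hr ε hε
  have hμ : IsCountablyAdditive μ := hadd
  have hcont : ContinuousOn (fun t : ℝ => μ ((t : ℂ) • A)) (Icc 0 1) :=
    continuousOn_Icc_of_additive_of_nonneg (fun _ _ hs ht hst => hμ.map_add_smul hA hs ht hst)
      (fun _ ht => hnn _ (hA.real_smul ht.1 ht.2)) (hμ.exists_smul_lt hA)
  obtain ⟨δ, hδ, hclose⟩ := Metric.continuousWithinAt_iff.1 (hcont r hr) ε hε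
  exact ⟨δ, hδ, fun q hq hqr => hclose hq hqr⟩
end

section
/- Orthogonality of distinguishable measurement records (Zurek): let U be a unitary on H_S ⊗ H_E, let x₁, x₂ be unit vectors in H_S and E₀, E₁, E₂ unit vectors in H_E such that U(x₁ ⊗ E₀) = x₁ ⊗ E₁ and U(x₂ ⊗ E₀) = x₂ ⊗ E₂. Then ⟨x₁, x₂⟩ · (1 − ⟨E₁, E₂⟩) = 0. In particular, if ⟨E₁, E₂⟩ ≠ 1, then x₁ and x₂ are orthogonal. -/
/-! The isometry `U` preserves `⟪x₁ ⊗ E₀, x₂ ⊗ E₀⟫ = ⟪x₁, x₂⟫`, while on the images the same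
inner product factorises as `⟪x₁, x₂⟫ ⟪E₁, E₂⟫`; comparing the two gives the claim. -/

theorem inner_mul_inner_self_eq_of_map_tensor {𝕜 S E H : Type*} [RCLike 𝕜]
    [NormedAddCommGroup S] [InnerProductSpace 𝕜 S]
    [NormedAddCommGroup E] [InnerProductSpace 𝕜 E]
    [NormedAddCommGroup H] [InnerProductSpace 𝕜 H]
    (t : S → E → H) (ht : ∀ x y e f, inner 𝕜 (t x e) (t y f) = inner 𝕜 x y * inner 𝕜 e f)
    (U : H →ₗᵢ[𝕜] H) {x₁ x₂ : S} {e₀ e₁ e₂ : E}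
    (hU₁ : U (t x₁ e₀) = t x₁ e₁) (hU₂ : U (t x₂ e₀) = t x₂ e₂) :
    inner 𝕜 x₁ x₂ * inner 𝕜 e₀ e₀ = inner 𝕜 x₁ x₂ * inner 𝕜 e₁ e₂ := by
  rw [← ht, ← ht, ← hU₁, ← hU₂, U.inner_map_map]

theorem stmt_14_general
    {H_S H_E H : Type*}
    [NormedAddCommGroup H_S] [InnerProductSpace ℂ H_S]
    [NormedAddCommGroup H_E] [InnerProductSpace ℂ H_E]
    [NormedAddCommGroup H] [InnerProductSpace ℂ H]
    -- `t x e` plays the role of the simple tensor `x ⊗ e`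
    (t : H_S → H_E → H)
    (ht : ∀ (x y : H_S) (e f : H_E),
      (inner ℂ (t x e) (t y f) : ℂ) = inner ℂ x y * inner ℂ e f)
    (U : H →ₗᵢ[ℂ] H)
    (x₁ x₂ : H_S) (E₀ E₁ E₂ : H_E)
    (hE₀ : ‖E₀‖ = 1)
    (hU₁ : U (t x₁ E₀) = t x₁ E₁) (hU₂ : U (t x₂ E₀) = t x₂ E₂) :
    (inner ℂ x₁ x₂ : ℂ) * (1 - (inner ℂ E₁ E₂ : ℂ)) = 0 ∧
    ((inner ℂ E₁ E₂ : ℂ) ≠ 1 → (inner ℂ x₁ x₂ : ℂ) = 0) := by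
  have hE₀E₀ : (inner ℂ E₀ E₀ : ℂ) = 1 := by
    rw [inner_self_eq_norm_sq_to_K, hE₀]
    norm_num
  have key := inner_mul_inner_self_eq_of_map_tensor t ht U hU₁ hU₂
  rw [hE₀E₀, mul_one] at key
  have hprod : (inner ℂ x₁ x₂ : ℂ) * (1 - inner ℂ E₁ E₂) = 0 := by
    rw [mul_sub, mul_one, ← key, sub_self]
  refine ⟨hprod, fun hne => ?_⟩
  exact (mul_eq_zero.mp hprod).resolve_right (sub_ne_zero.mpr hne.symm)

theorem stmt_14
    {H_S H_E H : Type*}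
    [NormedAddCommGroup H_S] [InnerProductSpace ℂ H_S]
    [NormedAddCommGroup H_E] [InnerProductSpace ℂ H_E]
    [NormedAddCommGroup H] [InnerProductSpace ℂ H]
    -- `t x e` plays the role of the simple tensor `x ⊗ e`
    (t : H_S → H_E → H)
    (ht : ∀ (x y : H_S) (e f : H_E),
      (inner ℂ (t x e) (t y f) : ℂ) = inner ℂ x y * inner ℂ e f)
    (U : H →ₗᵢ[ℂ] H)
    (x₁ x₂ : H_S) (E₀ E₁ E₂ : H_E)
    (hx₁ : ‖x₁‖ = 1) (hx₂ : ‖x₂‖ = 1)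
    (hE₀ : ‖E₀‖ = 1) (hE₁ : ‖E₁‖ = 1) (hE₂ : ‖E₂‖ = 1)
    (hU₁ : U (t x₁ E₀) = t x₁ E₁) (hU₂ : U (t x₂ E₀) = t x₂ E₂) :
    (inner ℂ x₁ x₂ : ℂ) * (1 - (inner ℂ E₁ E₂ : ℂ)) = 0 ∧
    ((inner ℂ E₁ E₂ : ℂ) ≠ 1 → (inner ℂ x₁ x₂ : ℂ) = 0) :=
  stmt_14_general t ht U x₁ x₂ E₀ E₁ E₂ hE₀ hU₁ hU₂
end
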